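/- arXiv:1310.3244 — 5 statements merged into one kernel-verified Lean document; each statement's English description precedes it below -/
import Mathlib

section
/- If S ⊆ ℕ is m-average-free (i.e., whenever A₁,…,A_m, B ∈ S satisfy A₁+⋯+A_m = m·B, then A₁=⋯=A_m=B), then for natural numbers d, n, the set S_m(d,n) of numbers of the form a₁ + (md-(m-1))·a₂ + ⋯ + (md-(m-1))^{n-1}·a_n, where (a₁,…,a_n) ∈ {0,…,d-1}^n contains each digit value 0,1,…,d-1 exactly n/d times (assuming d divides n), is m-average-free. -/
open scoped BigOperators

/-- A set S ⊆ ℕ is m-average-free: A₁+⋯+A_m = m·B with all A_i, B ∈ S forces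
A₁ = ⋯ = A_m = B. -/
def AvgFree (m : ℕ) (S : Set ℕ) : Prop :=
  ∀ (A : Fin m → ℕ) (B : ℕ), (∀ i, A i ∈ S) → B ∈ S →
    (∑ i, A i) = m * B → ∀ i, A i = B

/-- The set S_m(d,n): base-(md−(m−1)) numbers whose digit string (a₁,…,aₙ) has
digits in {0,…,d−1} and uses each digit value exactly n/d times. -/
def SmSet (m d n : ℕ) : Set ℕ :=
  {x | ∃ a : Fin n → ℕ, (∀ j, a j < d) ∧
    (∀ i : ℕ, i < d → (Finset.univ.filter fun j => a j = i).card = n / d) ∧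
    x = ∑ j : Fin n, a j * (m * d - (m - 1)) ^ (j : ℕ)}



/-- Uniqueness of base-b digit expansions. -/
lemma digit_unique {b : ℕ} (hb : 0 < b) : ∀ {n : ℕ} (f g : Fin n → ℕ),
    (∀ j, f j < b) → (∀ j, g j < b) →
    (∑ j, f j * b ^ (j : ℕ)) = ∑ j, g j * b ^ (j : ℕ) → ∀ j, f j = g j := by
  intro n
  induction n with
  | zero => intro f g _ _ _ j; exact j.elim0
  | succ n ih =>
    intro f g hf hg h j
    have expand : ∀ (f : Fin (n+1) → ℕ),
        (∑ j, f j * b ^ (j : ℕ)) = f 0 + b * ∑ j : Fin n, f j.succ * b ^ (j : ℕ) := by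
      intro f
      rw [Fin.sum_univ_succ]
      simp only [Fin.val_zero, pow_zero, mul_one, Fin.val_succ, pow_succ, Finset.mul_sum]
      congr 1; exact Finset.sum_congr rfl fun i _ => by ring
    rw [expand f, expand g] at h
    have h0 : f 0 = g 0 := by
      have := congrArg (· % b) h
      simpa [Nat.add_mul_mod_self_left, Nat.mod_eq_of_lt (hf 0), Nat.mod_eq_of_lt (hg 0)]
        using this
    have hrest : (∑ j : Fin n, f j.succ * b ^ (j : ℕ)) = ∑ j : Fin n, g j.succ * b ^ (j : ℕ) := by
      have := h
      rw [h0] at this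
      have := Nat.add_left_cancel this
      exact Nat.eq_of_mul_eq_mul_left hb this
    have := ih (fun j => f j.succ) (fun j => g j.succ) (fun j => hf j.succ) (fun j => hg j.succ) hrest
    refine Fin.cases h0 (fun j => this j) j


/-- S_m(d,n) is m-average-free. -/
theorem SmSet_avgFree (m d n : ℕ) (hm : 2 ≤ m) (hd : 0 < d) (hdn : d ∣ n) :
    AvgFree m (SmSet m d n) := by
  intro A B hA hB hsum i
  -- digit functions
  choose a halt hcnt heq using hA
  obtain ⟨bd, hblt, hbcnt, hbeq⟩ := hB
  set b : ℕ := m * d - (m - 1) with hbdef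
  -- b = m*(d-1) + 1
  have hbval : b = m * (d - 1) + 1 := by
    obtain ⟨e, rfl⟩ : ∃ e, d = e + 1 := ⟨d - 1, by omega⟩
    have h1 : m * (e + 1) = m * e + m := by ring
    simp only [hbdef, h1, Nat.add_sub_cancel, Nat.succ_sub_one]
    omega
  have hb1 : 0 < b := by omega
  -- no carries: digitwise equation
  have hdig : ∀ j : Fin n, (∑ i, a i j) = m * bd j := by
    have hsum' : (∑ j : Fin n, (∑ i, a i j) * b ^ (j : ℕ))
        = ∑ j : Fin n, (m * bd j) * b ^ (j : ℕ) := by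
      calc (∑ j : Fin n, (∑ i, a i j) * b ^ (j : ℕ))
          = ∑ j : Fin n, ∑ i, a i j * b ^ (j : ℕ) := by
            exact Finset.sum_congr rfl fun j _ => Finset.sum_mul ..
        _ = ∑ i, ∑ j : Fin n, a i j * b ^ (j : ℕ) := Finset.sum_comm
        _ = ∑ i, A i := by exact Finset.sum_congr rfl fun i _ => (heq i).symm
        _ = m * B := hsum
        _ = ∑ j : Fin n, (m * bd j) * b ^ (j : ℕ) := by
            rw [hbeq, Finset.mul_sum]
            exact Finset.sum_congr rfl fun j _ => by ring
    have hflt : ∀ j : Fin n, (∑ i, a i j) < b := by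
      intro j
      have : (∑ i, a i j) ≤ ∑ _i : Fin m, (d - 1) :=
        Finset.sum_le_sum fun i _ => by have := halt i j; omega
      simp only [Finset.sum_const, Finset.card_univ, Fintype.card_fin, smul_eq_mul] at this
      omega
    have hglt : ∀ j : Fin n, m * bd j < b := by
      intro j
      have h1 : bd j ≤ d - 1 := by have := hblt j; omega
      have := Nat.mul_le_mul_left m h1
      omega
    exact digit_unique hb1 _ _ hflt hglt hsum'
  -- downward induction on digit value: the level sets coincide
  have key : ∀ t v, v < d → d - v ≤ t → ∀ i,
      (Finset.univ.filter fun j => a i j = v) = (Finset.univ.filter fun j => bd j = v) := by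
    intro t
    induction t with
    | zero => intro v hv ht; omega
    | succ t ih =>
      intro v hv ht i
      -- at positions where bd = v, all digits are ≤ v
      have hle : ∀ i' (j : Fin n), bd j = v → a i' j ≤ v := by
        intro i' j hbj
        by_contra hgt
        push_neg at hgt
        have hw : a i' j < d := halt i' j
        have := ih (a i' j) hw (by omega) i'
        have hmem := Finset.ext_iff.mp this j
        simp only [Finset.mem_filter, Finset.mem_univ, true_and] at hmem
        have := hmem.mp trivial
        omega
      have hav : ∀ i' (j : Fin n), bd j = v → a i' j = v := by
        intro i' j hbj
        by_contra hne
        have hlt : a i' j < v := lt_of_le_of_ne (hle i' j hbj) hne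
        have : (∑ i, a i j) < ∑ _i : Fin m, v := by
          refine Finset.sum_lt_sum (fun k _ => hle k j hbj) ⟨i', Finset.mem_univ _, hlt⟩
        simp only [Finset.sum_const, Finset.card_univ, Fintype.card_fin, smul_eq_mul] at this
        rw [hdig j, hbj] at this
        omega
      -- subset and equal cards
      have hsub : (Finset.univ.filter fun j => bd j = v) ⊆
          (Finset.univ.filter fun j => a i j = v) := by
        intro j hj
        simp only [Finset.mem_filter, Finset.mem_univ, true_and] at hj ⊢
        exact hav i j hj
      have hcard : (Finset.univ.filter fun j => a i j = v).card ≤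
          (Finset.univ.filter fun j => bd j = v).card := by
        rw [hcnt i v hv, hbcnt v hv]
      exact (Finset.eq_of_subset_of_card_le hsub hcard).symm
  -- conclude
  rw [heq i, hbeq]
  refine Finset.sum_congr rfl fun j _ => ?_
  have hv : bd j < d := hblt j
  have := key d (bd j) hv (by omega) i
  have hmem := Finset.ext_iff.mp this j
  simp only [Finset.mem_filter, Finset.mem_univ, true_and] at hmem
  rw [hmem.mpr trivial]
end

section
/- Let ν_m(N) denote the maximal cardinality of an m-average-free subset of {1,…,N}. Then for each fixed m ≥ 2, log ν_m(N) / log N → 1 as N → ∞; equivalently, ν_m(N) = N^{1-o(1)}. -/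
open scoped BigOperators

/-- ν_m(N): the maximal cardinality of an m-average-free subset of {1,…,N}. -/
noncomputable def nu (m N : ℕ) : ℕ :=
  sSup {c : ℕ | ∃ S : Finset ℕ, ↑S ⊆ Set.Icc 1 N ∧ AvgFree m ↑S ∧ S.card = c}

open Finset Nat Real Filter

-- basics about nu
lemma nu_bddAbove (m N : ℕ) : ∀ c ∈ {c : ℕ | ∃ S : Finset ℕ, ↑S ⊆ Set.Icc 1 N ∧ AvgFree m ↑S ∧ S.card = c}, c ≤ N := by
  rintro c ⟨S, hS, -, rfl⟩
  have : S ⊆ Finset.Icc 1 N := by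
    rwa [← Finset.coe_subset, Finset.coe_Icc]
  calc S.card ≤ (Finset.Icc 1 N).card := Finset.card_le_card this
    _ = N := by rw [Nat.card_Icc]; omega

lemma le_nu {m N : ℕ} (S : Finset ℕ) (h1 : ↑S ⊆ Set.Icc 1 N) (h2 : AvgFree m ↑S) :
    S.card ≤ nu m N :=
  le_csSup ⟨N, nu_bddAbove m N⟩ ⟨S, h1, h2, rfl⟩

lemma nu_le (m N : ℕ) : nu m N ≤ N := by
  refine csSup_le ⟨0, ∅, by simp, ?_, by simp⟩ (nu_bddAbove m N)
  intro A B hA hB hs i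
  exact absurd (hA i) (by simp)

lemma one_le_nu (m : ℕ) {N : ℕ} (hN : 1 ≤ N) : 1 ≤ nu m N := by
  have := le_nu (m := m) (N := N) {1} ?_ ?_
  · simpa using this
  · simp [Set.mem_Icc, hN]
  · intro A B hA hB hs i
    have := hA i
    have := hB
    simp_all

-- map bound
lemma map_lt_pow {n M : ℕ} {x : Fin n → ℕ} (hx : ∀ i, x i < M) :
    Behrend.map M x < M ^ n := by
  induction n with
  | zero => simpa [Behrend.map_zero] using Nat.one_pos
  | succ n ih =>
    rw [Behrend.map_succ']
    have h0 : x 0 < M := hx 0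
    have hrec : Behrend.map M (x ∘ Fin.succ) < M ^ n := ih (fun i => hx i.succ)
    have : Behrend.map M (x ∘ Fin.succ) * M + M ≤ M ^ n * M := by
      have : Behrend.map M (x ∘ Fin.succ) + 1 ≤ M ^ n := hrec
      calc Behrend.map M (x ∘ Fin.succ) * M + M = (Behrend.map M (x ∘ Fin.succ) + 1) * M := by ring
        _ ≤ M ^ n * M := Nat.mul_le_mul_right _ this
    calc x 0 + Behrend.map M (x ∘ Fin.succ) * M < M + Behrend.map M (x ∘ Fin.succ) * M := by omega
      _ ≤ M ^ n * M := by omega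
      _ = M ^ (n+1) := by ring

-- convexity: sphere is average-free componentwise
lemma sphere_avg {m n d k : ℕ} (x : Fin m → (Fin n → ℕ)) (y : Fin n → ℕ)
    (hx : ∀ j, x j ∈ Behrend.sphere n d k) (hy : y ∈ Behrend.sphere n d k)
    (h : ∀ i, ∑ j, x j i = m * y i) : ∀ j, x j = y := by
  have hx2 : ∀ j, (∑ i, ((x j i : ℤ))^2) = k := by
    intro j
    have := (Finset.mem_filter.1 (hx j)).2
    exact_mod_cast congrArg (fun t : ℕ => (t : ℤ)) (by push_cast; exact_mod_cast this)
  have hy2 : (∑ i, ((y i : ℤ))^2) = k := by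
    have := (Finset.mem_filter.1 hy).2
    exact_mod_cast congrArg (fun t : ℕ => (t : ℤ)) (by push_cast; exact_mod_cast this)
  have hsum : ∀ i, (∑ j, (x j i : ℤ)) = m * y i := by
    intro i; exact_mod_cast congrArg (fun t : ℕ => (t : ℤ)) (h i)
  have key : ∑ j, ∑ i, ((x j i : ℤ) - y i)^2 = 0 := by
    have swap : ∑ j, ∑ i, ((x j i : ℤ) - y i)^2 = ∑ i, ∑ j, ((x j i : ℤ) - y i)^2 :=
      Finset.sum_comm
    have inner : ∀ i : Fin n, ∑ j : Fin m, ((x j i : ℤ) - y i)^2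
        = ∑ j : Fin m, (x j i : ℤ)^2 - (m : ℤ) * (y i)^2 := by
      intro i
      have expand : ∑ j : Fin m, ((x j i : ℤ) - y i)^2
          = ∑ j : Fin m, (x j i : ℤ)^2 - 2 * (∑ j : Fin m, (x j i : ℤ)) * y i
            + (m : ℤ) * (y i)^2 := by
        simp only [sub_sq]
        rw [Finset.sum_add_distrib, Finset.sum_sub_distrib, ← Finset.sum_mul, ← Finset.mul_sum,
          Finset.sum_const, Finset.card_univ, Fintype.card_fin, nsmul_eq_mul]
      rw [expand, hsum i]; ring
    rw [swap]
    rw [Finset.sum_congr rfl (fun i _ => inner i)]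
    rw [Finset.sum_sub_distrib, Finset.sum_comm, ← Finset.mul_sum]
    rw [Finset.sum_congr rfl (fun j _ => hx2 j), hy2]
    simp [mul_comm]
  intro j
  funext i
  have h1 : ∀ j ∈ (Finset.univ : Finset (Fin m)), (0:ℤ) ≤ ∑ i, ((x j i : ℤ) - y i)^2 :=
    fun j _ => Finset.sum_nonneg fun i _ => sq_nonneg _
  have h2 := (Finset.sum_eq_zero_iff_of_nonneg h1).1 key j (Finset.mem_univ j)
  have h3 := (Finset.sum_eq_zero_iff_of_nonneg (fun i _ => sq_nonneg _)).1 h2 i (Finset.mem_univ i)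
  have : (x j i : ℤ) = y i := by
    have := sq_eq_zero_iff.1 h3; linarith
  exact_mod_cast this

lemma construction (m n d k : ℕ) (hm : 1 ≤ m) :
    ∃ S : Finset ℕ, ↑S ⊆ Set.Icc 1 ((m*d)^n) ∧ AvgFree m ↑S ∧
      S.card = (Behrend.sphere n d k).card := by
  set M := m * d with hM
  have hdM : d ≤ M := Nat.le_mul_of_pos_left d hm
  refine ⟨(Behrend.sphere n d k).image (fun x => Behrend.map M x + 1), ?_, ?_, ?_⟩
  · intro a ha
    simp only [Finset.coe_image, Set.mem_image, Finset.mem_coe] at ha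
    obtain ⟨x, hx, rfl⟩ := ha
    have hxd : ∀ i, x i < d := Behrend.mem_box.1 (Behrend.sphere_subset_box hx)
    have : Behrend.map M x < M ^ n := map_lt_pow (fun i => lt_of_lt_of_le (hxd i) hdM)
    exact ⟨Nat.le_add_left 1 _, by omega⟩
  · intro A B hA hB hsum
    have hA' : ∀ j, ∃ x ∈ Behrend.sphere n d k, Behrend.map M x + 1 = A j := by
      intro j
      have := hA j
      simpa using Finset.mem_image.1 (by exact_mod_cast this)
    choose x hx hxA using hA'
    obtain ⟨y, hy, hyB⟩ : ∃ y ∈ Behrend.sphere n d k, Behrend.map M y + 1 = B := by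
      simpa using Finset.mem_image.1 (by exact_mod_cast hB)
    have hxd : ∀ j i, x j i < d := fun j => Behrend.mem_box.1 (Behrend.sphere_subset_box (hx j))
    have hyd : ∀ i, y i < d := Behrend.mem_box.1 (Behrend.sphere_subset_box hy)
    have hmap : ∑ j, Behrend.map M (x j) = m * Behrend.map M y := by
      have e1 : ∑ j, A j = ∑ j, (Behrend.map M (x j) + 1) := by
        exact Finset.sum_congr rfl (fun j _ => (hxA j).symm)
      rw [e1, Finset.sum_add_distrib, Finset.sum_const, Finset.card_univ, Fintype.card_fin,
        smul_eq_mul, mul_one, ← hyB, Nat.mul_add, mul_one] at hsum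
      omega
    have hvec : (∑ j, x j) = m • y := by
      apply Behrend.map_injOn (d := M)
      · intro i
        simp only [Finset.sum_apply]
        calc ∑ j, x j i ≤ ∑ _j : Fin m, (d - 1) :=
              Finset.sum_le_sum (fun j _ => Nat.le_sub_one_of_lt (hxd j i))
          _ = m * (d - 1) := by simp [mul_comm]
          _ < m * d := by
              have hd1 : 0 < d := lt_of_le_of_lt (Nat.zero_le _) (hyd i)
              exact mul_lt_mul_of_pos_left (by omega) hm
      · intro i
        simp only [Pi.smul_apply, smul_eq_mul]
        exact mul_lt_mul_of_pos_left (hyd i) hm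
      · rw [map_sum, map_nsmul, smul_eq_mul]
        exact hmap
    have hcomp : ∀ i, ∑ j, x j i = m * y i := by
      intro i
      have := congrFun hvec i
      simpa [Finset.sum_apply] using this
    have := sphere_avg x y hx hy hcomp
    intro j
    rw [← hxA j, ← hyB, this j]
  · apply Finset.card_image_of_injOn
    intro a ha b hb hab
    have had : ∀ i, a i < M := fun i =>
      lt_of_lt_of_le (Behrend.mem_box.1 (Behrend.sphere_subset_box ha) i) hdM
    have hbd : ∀ i, b i < M := fun i =>
      lt_of_lt_of_le (Behrend.mem_box.1 (Behrend.sphere_subset_box hb) i) hdM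
    have hab' : Behrend.map M a + 1 = Behrend.map M b + 1 := hab
    exact Behrend.map_injOn had hbd (by omega)

lemma nu_lower (m n d N : ℕ) (hm : 1 ≤ m) (h : (m*d)^n ≤ N) :
    ((d ^ n : ℕ) : ℝ) / ((n * d ^ 2 : ℕ) : ℝ) ≤ (nu m N : ℝ) := by
  obtain ⟨k, hk⟩ := Behrend.exists_large_sphere n d
  obtain ⟨S, hS1, hS2, hS3⟩ := construction m n d k hm
  have hsub : (S : Set ℕ) ⊆ Set.Icc 1 N := hS1.trans (Set.Icc_subset_Icc_right (by exact_mod_cast h))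
  have := le_nu S hsub hS2
  calc ((d ^ n : ℕ) : ℝ) / ((n * d ^ 2 : ℕ) : ℝ) ≤ ((Behrend.sphere n d k).card : ℝ) := by
        exact_mod_cast hk
    _ = (S.card : ℝ) := by rw [hS3]
    _ ≤ (nu m N : ℝ) := by exact_mod_cast this

open Filter Real in
lemma tendsto_sqrt_log : Filter.Tendsto (fun N : ℕ => √(Real.log N)) atTop atTop := by
  have tlog : Tendsto (fun N : ℕ => Real.log N) atTop atTop :=
    Real.tendsto_log_atTop.comp tendsto_natCast_atTop_atTop
  have tsqrt : Tendsto Real.sqrt atTop atTop := by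
    refine Filter.tendsto_atTop_atTop.2 fun b => ⟨max 0 b ^ 2, fun a ha => ?_⟩
    have h0 : (0:ℝ) ≤ max 0 b := le_max_left _ _
    have : max 0 b ≤ √a := by
      rw [show max 0 b = √((max 0 b)^2) from (Real.sqrt_sq h0).symm]
      exact Real.sqrt_le_sqrt ha
    exact le_trans (le_max_right 0 b) this
  exact tsqrt.comp tlog

open Filter Real in
lemma nu_log_lb (m : ℕ) (hm : 2 ≤ m) :
    ∀ᶠ N : ℕ in atTop, Real.log N - (Real.log (4*m) + 4) * √(Real.log N)
      ≤ Real.log (nu m N) := by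
  have hm0 : (0:ℝ) < m := by positivity
  have hm1 : (1:ℝ) ≤ m := by exact_mod_cast (by omega : 1 ≤ m)
  have h4m1 : (1:ℝ) ≤ 4 * m := by linarith
  have hC0 : 0 ≤ Real.log (4*m) := Real.log_nonneg h4m1
  filter_upwards [tendsto_sqrt_log.eventually_ge_atTop (max 1 (Real.log (4*m) + 1)),
    Filter.eventually_ge_atTop 1] with N hsL hN1
  set L := Real.log N with hLdef
  set C := Real.log (4*m) with hCdef
  have hL1 : 1 ≤ √L := le_trans (le_max_left _ _) hsL
  have hCs : C + 1 ≤ √L := le_trans (le_max_right _ _) hsL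
  have hL0 : 0 < L := Real.sqrt_pos.1 (lt_of_lt_of_le one_pos hL1)
  have hsq : √L * √L = L := Real.mul_self_sqrt hL0.le
  have hLge1 : 1 ≤ L := by nlinarith
  set n := ⌈√L⌉₊ with hndef
  have hnlb : √L ≤ (n:ℝ) := Nat.le_ceil _
  have hnub : (n:ℝ) ≤ √L + 1 := (Nat.ceil_lt_add_one (Real.sqrt_nonneg _)).le
  have hn0 : (0:ℝ) < n := lt_of_lt_of_le (lt_of_lt_of_le one_pos hL1) hnlb
  have hnne : (n:ℝ) ≠ 0 := hn0.ne'
  have hnnat : n ≠ 0 := by exact_mod_cast hnne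
  have hN0 : (0:ℝ) < (N:ℝ) := by exact_mod_cast hN1
  set R := (N:ℝ) ^ ((n:ℝ)⁻¹) with hRdef
  have hR0 : 0 < R := Real.rpow_pos_of_pos hN0 _
  have hlogR : Real.log R = L / n := by
    rw [hRdef, Real.log_rpow hN0, inv_mul_eq_div]
  have hdivlb : √L - 1 ≤ L / n := by
    rw [le_div_iff₀ hn0]
    nlinarith
  have hdivub : L / n ≤ √L := by
    rw [div_le_iff₀ hn0]
    nlinarith
  have hRlb : Real.exp (√L - 1) ≤ R := by
    calc Real.exp (√L - 1) ≤ Real.exp (L / n) := Real.exp_le_exp.2 hdivlb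
      _ = R := by rw [← hlogR, Real.exp_log hR0]
  have hR4m : (4*(m:ℝ)) ≤ R := by
    calc (4*(m:ℝ)) = Real.exp C := (Real.exp_log (by positivity)).symm
      _ ≤ Real.exp (√L - 1) := Real.exp_le_exp.2 (by linarith)
      _ ≤ R := hRlb
  set d := ⌊R / (2*m)⌋₊ with hddef
  have hd_ub : (d:ℝ) ≤ R / (2*m) := Nat.floor_le (by positivity)
  have hquarter : (1:ℝ) ≤ R / (4*m) := (one_le_div (by positivity)).2 hR4m
  have hhalf : R/(2*m) - R/(4*m) = R/(4*m) := by field_simp; ring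
  have hd_lb : R/(4*m) ≤ (d:ℝ) := by
    have hfl := Nat.sub_one_lt_floor (R/(2*m))
    have : R/(2*m) - 1 < (d:ℝ) := hfl
    linarith
  have hd1 : 1 ≤ d := by exact_mod_cast le_trans hquarter hd_lb
  have hd0 : (0:ℝ) < d := by exact_mod_cast hd1
  have hmd : (m*d)^n ≤ N := by
    have h1 : ((m*d : ℕ):ℝ) ≤ R := by
      push_cast
      calc (m:ℝ) * d ≤ (m:ℝ) * (R/(2*m)) := by
            exact mul_le_mul_of_nonneg_left hd_ub (by positivity)
        _ = R / 2 := by field_simp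
        _ ≤ R := by linarith
    have h2 : (((m*d : ℕ):ℝ))^n ≤ R^n := pow_le_pow_left₀ (by positivity) h1 n
    have h3 : R^n = (N:ℝ) := by
      rw [hRdef, ← Real.rpow_natCast ((N:ℝ) ^ ((n:ℝ)⁻¹)) n, ← Real.rpow_mul hN0.le,
        inv_mul_cancel₀ hnne, Real.rpow_one]
    have : (((m*d)^n : ℕ) : ℝ) ≤ (N:ℝ) := by push_cast; rw [← h3]; exact_mod_cast h2
    exact_mod_cast this
  have hmain := nu_lower m n d N (by omega) hmd
  have hnum0 : (0:ℝ) < ((d^n : ℕ):ℝ) := by positivity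
  have hden0 : (0:ℝ) < ((n * d^2 : ℕ):ℝ) := by
    have : 0 < n * d^2 := by positivity
    exact_mod_cast this
  have hlognu : (n:ℝ) * Real.log d - Real.log n - 2 * Real.log d ≤ Real.log (nu m N) := by
    have hfrac0 : (0:ℝ) < ((d^n : ℕ):ℝ) / ((n * d^2 : ℕ):ℝ) := by positivity
    have := Real.log_le_log hfrac0 hmain
    rw [Real.log_div hnum0.ne' hden0.ne'] at this
    have e1 : Real.log ((d^n : ℕ):ℝ) = (n:ℝ) * Real.log d := by
      push_cast
      rw [Real.log_pow]
    have e2 : Real.log ((n * d^2 : ℕ):ℝ) = Real.log n + 2 * Real.log d := by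
      push_cast
      rw [Real.log_mul hnne (by positivity), Real.log_pow]
      push_cast; ring
    rw [e1, e2] at this
    linarith
  -- bounds on log d
  have hlogd_ub : Real.log d ≤ L / n := by
    have hdR : (d:ℝ) ≤ R := le_trans hd_ub (by
      apply div_le_self hR0.le
      linarith)
    calc Real.log d ≤ Real.log R := Real.log_le_log hd0 hdR
      _ = L / n := hlogR
  have hlogd_lb : L / n - C ≤ Real.log d := by
    have h1 : Real.log (R/(4*m)) ≤ Real.log d := Real.log_le_log (by positivity) hd_lb
    have h2 : Real.log (R/(4*m)) = L/n - C := by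
      rw [Real.log_div hR0.ne' (by positivity), hlogR, hCdef]
    linarith
  have hlogn : Real.log n ≤ √L := by
    have := Real.log_le_sub_one_of_pos hn0
    linarith
  -- assemble
  have t1 : (n:ℝ) * (L/n - C) ≤ (n:ℝ) * Real.log d :=
    mul_le_mul_of_nonneg_left hlogd_lb hn0.le
  have t2 : (n:ℝ) * (L/n - C) = L - (n:ℝ) * C := by
    rw [mul_sub, mul_div_cancel₀ _ hnne]
  have t3 : (n:ℝ) * C ≤ (√L + 1) * C := mul_le_mul_of_nonneg_right hnub hC0
  have e3 : (√L + 1) * C = √L * C + C := by ring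
  have e4 : (C + 4) * √L = C * √L + 4 * √L := by ring
  have hCsL : C ≤ √L := by linarith
  linarith [t1, t2, t3, e3, e4, hCsL, hlogd_ub, hdivub, hlognu, hlogn]

/-- ν_m(N) = N^{1−o(1)}: log ν_m(N) / log N → 1 as N → ∞. -/
theorem nu_log_ratio_tendsto_one (m : ℕ) (hm : 2 ≤ m) :
    Filter.Tendsto (fun N : ℕ => Real.log (nu m N) / Real.log N)
      Filter.atTop (nhds 1) := by

  set K := Real.log (4*m) + 4 with hKdef
  -- lower comparison function tends to 1
  have hg : Filter.Tendsto (fun N : ℕ => (Real.log N - K * √(Real.log N)) / Real.log N)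
      Filter.atTop (nhds 1) := by
    have h1 : Filter.Tendsto (fun N : ℕ => 1 - K / √(Real.log N)) Filter.atTop (nhds (1 - 0)) :=
      Filter.Tendsto.sub tendsto_const_nhds (Filter.Tendsto.div_atTop tendsto_const_nhds
        tendsto_sqrt_log)
    rw [sub_zero] at h1
    apply Filter.Tendsto.congr' _ h1
    filter_upwards [tendsto_sqrt_log.eventually_ge_atTop 1] with N hL1
    have hL0 : 0 < Real.log N := Real.sqrt_pos.1 (lt_of_lt_of_le one_pos hL1)
    have hs0 : √(Real.log N) ≠ 0 := by positivity
    rw [sub_div, div_self hL0.ne', mul_div_assoc, Real.sqrt_div_self', mul_one_div]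
  have upper : ∀ᶠ N : ℕ in Filter.atTop,
      Real.log (nu m N) / Real.log N ≤ 1 := by
    filter_upwards [Filter.eventually_ge_atTop 2] with N hN2
    have hN1 : (1:ℝ) < N := by exact_mod_cast (by omega : 1 < N)
    have hL0 : 0 < Real.log N := Real.log_pos hN1
    have hnu1 : 1 ≤ nu m N := one_le_nu m (by omega)
    have hnu0 : (0:ℝ) < (nu m N : ℝ) := by exact_mod_cast hnu1
    have : Real.log (nu m N) ≤ Real.log N :=
      Real.log_le_log hnu0 (by exact_mod_cast nu_le m N)
    exact (div_le_one hL0).2 this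
  have lower : ∀ᶠ N : ℕ in Filter.atTop,
      (Real.log N - K * √(Real.log N)) / Real.log N ≤ Real.log (nu m N) / Real.log N := by
    filter_upwards [nu_log_lb m hm, Filter.eventually_ge_atTop 2] with N hlb hN2
    have hN1 : (1:ℝ) < N := by exact_mod_cast (by omega : 1 < N)
    have hL0 : 0 < Real.log N := Real.log_pos hN1
    exact div_le_div_of_nonneg_right hlb hL0.le
  exact tendsto_of_tendsto_of_tendsto_of_le_of_le' hg tendsto_const_nhds lower upper
end

section
/- For m ≤ n, the identity (1/(m+1))·Σ_{j=1}^{m+1} e^{−2πi m j/(m+1)} (|0⟩ + ε e^{2πi j/(m+1)}|1⟩)^{⊗(m+n)} = ε^m · D_{m,n} + O(ε^{2m+1}) holds, where D_{m,n} ∈ (ℂ²)^{⊗(m+n)} is the Dicke state equal to the sum over all computational basis vectors with exactly m ones (equivalently the symmetrization of |1…10…0⟩ with m ones and n zeros). Consequently the border rank of D_{m,n} is at most m+1. -/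
open scoped BigOperators

private lemma dvdMod (m k : ℕ) : ((m:ℤ)+1 ∣ (k:ℤ) - m) ↔ k % (m+1) = m := by
  rcases le_or_gt m k with h | h
  · have h1 : ((m:ℤ)+1 ∣ (k:ℤ) - m) ↔ (m+1 ∣ k - m) := by
      rw [← Nat.cast_sub h]
      exact_mod_cast (Int.natCast_dvd_natCast (m := m+1) (n := k - m)).symm
    rw [h1, ← Nat.modEq_iff_dvd' h]
    unfold Nat.ModEq
    rw [Nat.mod_eq_of_lt (by omega)]
    exact eq_comm
  · constructor
    · intro hd
      have hd' : ((m:ℤ)+1 ∣ (m:ℤ) - k) := by have := dvd_neg.mpr hd; simpa using this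
      have := Int.le_of_dvd (by omega) hd'
      omega
    · intro hk; rw [Nat.mod_eq_of_lt (by omega)] at hk; omega

private lemma keySum (m k : ℕ) (ε : ℂ) :
    (1 / ((m : ℂ) + 1)) * ∑ j ∈ Finset.range (m + 1),
      Complex.exp (-(2 * Real.pi * Complex.I * m * ((j : ℂ) + 1)) / ((m : ℂ) + 1)) *
        (ε * Complex.exp ((2 * Real.pi * Complex.I * ((j : ℂ) + 1)) / ((m : ℂ) + 1))) ^ k
    = if k % (m + 1) = m then ε ^ k else 0 := by
  have hM : ((m:ℂ) + 1) ≠ 0 := Nat.cast_add_one_ne_zero m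
  have h2 : (2:ℂ) * Real.pi * Complex.I ≠ 0 :=
    mul_ne_zero (mul_ne_zero two_ne_zero (Complex.ofReal_ne_zero.mpr Real.pi_ne_zero))
      Complex.I_ne_zero
  set θ : ℂ := 2 * Real.pi * Complex.I * ((k : ℂ) - m) / ((m : ℂ) + 1) with hθ
  set ζ : ℂ := Complex.exp θ with hζ
  have hterm : ∀ j ∈ Finset.range (m+1),
      Complex.exp (-(2 * Real.pi * Complex.I * m * ((j : ℂ) + 1)) / ((m : ℂ) + 1)) *
        (ε * Complex.exp ((2 * Real.pi * Complex.I * ((j : ℂ) + 1)) / ((m : ℂ) + 1))) ^ k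
      = ε ^ k * ζ ^ (j+1) := by
    intro j _
    rw [mul_pow, ← Complex.exp_nat_mul, hζ, ← Complex.exp_nat_mul, mul_left_comm,
      ← Complex.exp_add]
    congr 2
    rw [hθ]
    push_cast
    field_simp
    ring
  rw [Finset.sum_congr rfl hterm, ← Finset.mul_sum]
  have hpow : ζ ^ (m+1) = 1 := by
    rw [hζ, ← Complex.exp_nat_mul]
    have h3 : ((m+1 : ℕ):ℂ) * θ = (((k:ℤ) - (m:ℤ) : ℤ) : ℂ) * (2 * Real.pi * Complex.I) := by
      rw [hθ]; push_cast; field_simp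
    rw [h3, Complex.exp_int_mul_two_pi_mul_I]
  have hiff : ζ = 1 ↔ k % (m+1) = m := by
    rw [hζ, Complex.exp_eq_one_iff, ← dvdMod m k]
    constructor
    · rintro ⟨n, hn⟩
      refine ⟨n, ?_⟩
      rw [hθ] at hn
      have h5 : (2:ℂ) * Real.pi * Complex.I * ((k:ℂ) - m)
          = 2 * Real.pi * Complex.I * (((m:ℂ)+1) * n) := by
        have := div_eq_iff hM |>.mp hn
        linear_combination this
      have h4 : (k:ℂ) - m = ((m:ℂ)+1) * n := mul_left_cancel₀ h2 h5
      exact_mod_cast h4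
    · rintro ⟨n, hn⟩
      refine ⟨n, ?_⟩
      have h4 : (k:ℂ) - m = ((m:ℂ)+1) * n := by exact_mod_cast hn
      rw [hθ, h4]; field_simp
  by_cases h : k % (m+1) = m
  · rw [if_pos h]
    have hone : ζ = 1 := hiff.mpr h
    simp only [hone, one_pow, Finset.sum_const, Finset.card_range, nsmul_eq_mul]
    push_cast
    field_simp
  · rw [if_neg h]
    have hne : ζ ≠ 1 := fun hc => h (hiff.mp hc)
    have h5 : ∑ j ∈ Finset.range (m+1), ζ ^ (j+1) = ζ * ∑ j ∈ Finset.range (m+1), ζ ^ j := by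
      rw [Finset.mul_sum]; exact Finset.sum_congr rfl (fun j _ => by ring)
    rw [h5, geom_sum_eq hne, hpow]
    simp

private lemma prodIf (N : ℕ) (v : Fin N → Fin 2) (c : ℂ) :
    (∏ i, (if v i = 0 then 1 else c)) = c ^ (Finset.univ.filter fun i => v i = 1).card := by
  rw [← Finset.prod_const, Finset.prod_filter]
  apply Finset.prod_congr rfl
  intro i _
  have : v i = 0 ∨ v i = 1 := by omega
  rcases this with h | h <;> simp [h]

private lemma mod_ge (m k : ℕ) (h : k % (m+1) = m) : m ≤ k := by
  by_contra hc
  rw [Nat.mod_eq_of_lt (by omega)] at h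
  omega

private lemma mod_ge' (m k : ℕ) (h : k % (m+1) = m) (h2 : k ≠ m) : 2*m+1 ≤ k := by
  have hm := mod_ge m k h
  have hd := Nat.div_add_mod k (m+1)
  rw [h] at hd
  have hq : k / (m+1) ≠ 0 := by
    intro h0; rw [h0] at hd; omega
  have h3 : m + 1 ≤ (m+1) * (k / (m+1)) := Nat.le_mul_of_pos_right _ (Nat.pos_of_ne_zero hq)
  omega

/-- The Dicke state D_{m,n} ∈ (ℂ²)^{⊗(m+n)}: sum of all basis vectors with
exactly m ones. -/
noncomputable def Dicke (m n : ℕ) : ((_ : Fin (m + n)) → Fin 2) → ℂ :=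
  fun v => if (Finset.univ.filter fun i => v i = 1).card = m then 1 else 0

/-- A tensor on (ℂ²)^{⊗k} has rank at most r. -/
def rankLE {k : ℕ} (T : ((_ : Fin k) → Fin 2) → ℂ) (r : ℕ) : Prop :=
  ∃ u : Fin r → Fin k → Fin 2 → ℂ, ∀ v, T v = ∑ s : Fin r, ∏ i, u s i (v i)

/-- The root-of-unity identity
(1/(m+1))·Σ_j e^{−2πimj/(m+1)} (|0⟩+εe^{2πij/(m+1)}|1⟩)^{⊗(m+n)} = ε^m·D_{m,n} + O(ε^{2m+1}),
whence the border rank of D_{m,n} is at most m+1. -/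
theorem Dicke_border_rank_le (m n : ℕ) (hmn : m ≤ n) :
    (∃ c : ℕ → (((_ : Fin (m + n)) → Fin 2) → ℂ),
      ∀ (ε : ℂ) (v : (_ : Fin (m + n)) → Fin 2),
        (1 / ((m : ℂ) + 1)) * ∑ j ∈ Finset.range (m + 1),
          Complex.exp (-(2 * Real.pi * Complex.I * m * ((j : ℂ) + 1)) / ((m : ℂ) + 1)) *
            ∏ i, (if v i = 0 then 1 else
              ε * Complex.exp ((2 * Real.pi * Complex.I * ((j : ℂ) + 1)) / ((m : ℂ) + 1)))
        = ε ^ m * Dicke m n v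
          + ∑ t ∈ Finset.range (m + n), ε ^ (2 * m + 1 + t) * c t v) ∧
    (∃ f : ℕ → (((_ : Fin (m + n)) → Fin 2) → ℂ),
      (∀ s, rankLE (f s) (m + 1)) ∧
      Filter.Tendsto f Filter.atTop (nhds (Dicke m n))) := by
  have hM : ((m:ℂ) + 1) ≠ 0 := Nat.cast_add_one_ne_zero m
  constructor
  · -- Part 1
    refine ⟨fun t v => if (Finset.univ.filter fun i => v i = 1).card = 2*m+1+t
        ∧ (2*m+1+t) % (m+1) = m then 1 else 0, ?_⟩
    intro ε v
    set k := (Finset.univ.filter fun i => v i = 1).card with hk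
    have hLHS : (1 / ((m : ℂ) + 1)) * ∑ j ∈ Finset.range (m + 1),
          Complex.exp (-(2 * Real.pi * Complex.I * m * ((j : ℂ) + 1)) / ((m : ℂ) + 1)) *
            ∏ i, (if v i = 0 then 1 else
              ε * Complex.exp ((2 * Real.pi * Complex.I * ((j : ℂ) + 1)) / ((m : ℂ) + 1)))
        = if k % (m + 1) = m then ε ^ k else 0 := by
      rw [← keySum m k ε]
      congr 1
      apply Finset.sum_congr rfl
      intro j _
      rw [prodIf]
    rw [hLHS]
    have hkle : k ≤ m + n := by
      calc k ≤ (Finset.univ : Finset (Fin (m+n))).card := Finset.card_filter_le _ _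
      _ = m + n := by simp
    simp only [Dicke, ← hk]
    by_cases h : k % (m+1) = m
    · rw [if_pos h]
      by_cases h2 : k = m
      · rw [if_pos h2]
        have : ∀ t ∈ Finset.range (m+n),
            ε ^ (2*m+1+t) * (if k = 2*m+1+t ∧ (2*m+1+t) % (m+1) = m then 1 else 0) = 0 := by
          intro t _
          rw [if_neg (by omega), mul_zero]
        rw [Finset.sum_congr rfl this, Finset.sum_const_zero, h2]
        ring
      · rw [if_neg h2]
        have hge := mod_ge' m k h h2
        have ht0 : k - (2*m+1) ∈ Finset.range (m+n) := by
          rw [Finset.mem_range]; omega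
        rw [Finset.sum_eq_single_of_mem _ ht0 (fun t _ ht => by
          rw [if_neg (by omega), mul_zero])]
        rw [if_pos ⟨by omega, by rw [show 2*m+1+(k-(2*m+1)) = k by omega]; exact h⟩]
        rw [show 2*m+1+(k-(2*m+1)) = k by omega]
        ring
    · rw [if_neg h, if_neg (fun h2 => h (by rw [h2]; exact Nat.mod_eq_of_lt (by omega)))]
      have : ∀ t ∈ Finset.range (m+n),
          ε ^ (2*m+1+t) * (if k = 2*m+1+t ∧ (2*m+1+t) % (m+1) = m then 1 else 0) = 0 := by
        intro t _
        rw [if_neg (fun ⟨ha, hb⟩ => h (ha ▸ hb)), mul_zero]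
      rw [Finset.sum_congr rfl this, Finset.sum_const_zero]
      ring
  · -- Part 2
    set εs : ℕ → ℂ := fun s => 1 / ((s:ℂ) + 1) with hεs
    have hεne : ∀ s, εs s ≠ 0 := fun s =>
      one_div_ne_zero (Nat.cast_add_one_ne_zero s)
    set u : ℕ → Fin (m+1) → Fin (m+n) → Fin 2 → ℂ := fun s j i x =>
      (if (i:ℕ) = 0 then
        Complex.exp (-(2 * Real.pi * Complex.I * m * (((j:ℕ):ℂ) + 1)) / ((m : ℂ) + 1))
          / (((m:ℂ)+1) * (εs s)^m) else 1) *
      (if x = 0 then 1 else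
        εs s * Complex.exp ((2 * Real.pi * Complex.I * (((j:ℕ):ℂ) + 1)) / ((m : ℂ) + 1)))
      with hu
    refine ⟨fun s v => ∑ j : Fin (m+1), ∏ i, u s j i (v i), fun s => ⟨u s, fun v => rfl⟩, ?_⟩
    have hf : ∀ (s : ℕ) (v : Fin (m+n) → Fin 2), (∑ j : Fin (m+1), ∏ i, u s j i (v i))
        = if (Finset.univ.filter fun i => v i = 1).card % (m+1) = m
          then (εs s) ^ ((Finset.univ.filter fun i => v i = 1).card - m) else 0 := by
      intro s v
      set k := (Finset.univ.filter fun i => v i = 1).card with hk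
      rcases Nat.eq_zero_or_pos (m + n) with h0 | hpos
      · -- m + n = 0, so m = 0 and k = 0
        have hm0 : m = 0 := by omega
        haveI hie : IsEmpty (Fin (m+n)) := by rw [h0]; infer_instance
        have hk0 : k = 0 := by
          have hle : k ≤ m + n := by
            rw [hk]
            calc (Finset.univ.filter fun i => v i = 1).card
                ≤ (Finset.univ : Finset (Fin (m+n))).card := Finset.card_filter_le _ _
              _ = m + n := by simp; omega
          omega
        have hcond : k % (m+1) = m := by simp [hk0, hm0]
        have hsub : k - m = 0 := by omega
        rw [if_pos hcond, hsub, pow_zero]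
        have hprod1 : ∀ j : Fin (m+1), (∏ i, u s j i (v i)) = 1 := fun j => by
          rw [Finset.univ_eq_empty, Finset.prod_empty]
        rw [Finset.sum_congr rfl (fun j _ => hprod1 j), Finset.sum_const, Finset.card_univ,
          Fintype.card_fin, nsmul_eq_mul, mul_one]
        simp [hm0]
      · have hprod : ∀ j : Fin (m+1), (∏ i, u s j i (v i))
            = (Complex.exp (-(2 * Real.pi * Complex.I * m * (((j:ℕ):ℂ) + 1)) / ((m : ℂ) + 1))
                / (((m:ℂ)+1) * (εs s)^m)) *
              (εs s * Complex.exp ((2 * Real.pi * Complex.I * (((j:ℕ):ℂ) + 1)) / ((m : ℂ) + 1))) ^ k := by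
          intro j
          rw [hu]
          rw [Finset.prod_mul_distrib]
          congr 1
          · rw [Finset.prod_eq_single_of_mem (⟨0, hpos⟩ : Fin (m+n)) (Finset.mem_univ _)
              (fun i _ hi => if_neg (fun hc => hi (Fin.ext hc)))]
            exact if_pos rfl
          · exact prodIf (m+n) v _
        rw [Finset.sum_congr rfl (fun j _ => hprod j)]
        have : ∑ j : Fin (m+1), (Complex.exp (-(2 * Real.pi * Complex.I * m * (((j:ℕ):ℂ) + 1)) / ((m : ℂ) + 1))
                / (((m:ℂ)+1) * (εs s)^m)) *
              (εs s * Complex.exp ((2 * Real.pi * Complex.I * (((j:ℕ):ℂ) + 1)) / ((m : ℂ) + 1))) ^ k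
            = (1 / (εs s)^m) * ((1 / ((m:ℂ)+1)) * ∑ j ∈ Finset.range (m+1),
              Complex.exp (-(2 * Real.pi * Complex.I * m * ((j:ℂ) + 1)) / ((m : ℂ) + 1)) *
              (εs s * Complex.exp ((2 * Real.pi * Complex.I * ((j:ℂ) + 1)) / ((m : ℂ) + 1))) ^ k) := by
          rw [Finset.mul_sum, Finset.mul_sum, Fin.sum_univ_eq_sum_range
            (fun j => (Complex.exp (-(2 * Real.pi * Complex.I * m * ((j:ℂ) + 1)) / ((m : ℂ) + 1))
                / (((m:ℂ)+1) * (εs s)^m)) *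
              (εs s * Complex.exp ((2 * Real.pi * Complex.I * ((j:ℂ) + 1)) / ((m : ℂ) + 1))) ^ k)]
          apply Finset.sum_congr rfl
          intro j _
          field_simp
        rw [this, keySum m k (εs s)]
        by_cases h : k % (m+1) = m
        · rw [if_pos h, if_pos h, pow_sub₀ _ (hεne s) (mod_ge m k h)]
          field_simp
        · rw [if_neg h, if_neg h, mul_zero]
    rw [tendsto_pi_nhds]
    intro v
    simp only [hf]
    set k := (Finset.univ.filter fun i => v i = 1).card with hk
    have hDicke : Dicke m n v = if k = m then 1 else 0 := rfl
    rw [hDicke]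
    by_cases h : k % (m+1) = m
    · simp only [if_pos h]
      by_cases h2 : k = m
      · rw [if_pos h2, h2, Nat.sub_self]
        simp only [pow_zero]
        exact tendsto_const_nhds
      · rw [if_neg h2]
        have hgt : m < k := lt_of_le_of_ne (mod_ge m k h) (fun hc => h2 hc.symm)
        have hε0 : Filter.Tendsto εs Filter.atTop (nhds 0) := by
          rw [tendsto_zero_iff_norm_tendsto_zero]
          have heq : ∀ s : ℕ, ‖εs s‖ = 1 / ((s:ℝ) + 1) := by
            intro s
            rw [hεs]
            simp only [norm_div, norm_one]
            congr 1
            rw [show ((s:ℂ) + 1) = ((s+1 : ℕ) : ℂ) by push_cast; ring, Complex.norm_natCast]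
            push_cast; ring
          simp only [heq]
          exact tendsto_one_div_add_atTop_nhds_zero_nat
        have := hε0.pow (k - m)
        rw [zero_pow (by omega)] at this
        exact this
    · simp only [if_neg h]
      rw [if_neg (fun h2 => h (by rw [h2]; exact Nat.mod_eq_of_lt (by omega)))]
      exact tendsto_const_nhds
end

section
/- The Schmidt rank of the Dicke state D_{m,n} ∈ (ℂ²)^{⊗(m+n)} across the bipartite cut separating the first m subsystems from the last n subsystems equals min(m,n)+1 = m+1 (assuming m ≤ n). Hence the border rank of D_{m,n} is exactly m+1. -/
open scoped BigOperators

/-- Flattening of D_{m,n} across the cut {1,…,m} vs {m+1,…,m+n}. -/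
noncomputable def DickeFlat (m n : ℕ) :
    Matrix ((_ : Fin m) → Fin 2) ((_ : Fin n) → Fin 2) ℂ :=
  fun x y => if (Finset.univ.filter fun i => x i = 1).card
      + (Finset.univ.filter fun i => y i = 1).card = m then 1 else 0

/-- T has border rank at most r: it is a limit of tensors of rank ≤ r. -/
def borderRankLE {k : ℕ} (T : ((_ : Fin k) → Fin 2) → ℂ) (r : ℕ) : Prop :=
  ∃ f : ℕ → (((_ : Fin k) → Fin 2) → ℂ),
    (∀ s, rankLE (f s) r) ∧ Filter.Tendsto f Filter.atTop (nhds T)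

/-!
An entry of the flattening of `D_{m,n}` depends only on the weight of its row index, which takes
`m + 1` values; rows of weight `j` against columns of weight `m - j` (possible as `m ≤ n`) form an
identity minor of size `m + 1`. That minor depends continuously on the tensor and is singular for
tensors of rank at most `m`, so it bounds the border rank from below as well.

For the upper bound, solve the Vandermonde system `∑ j, c j * j ^ w = if w = m then 1 else 0`
(`w ≤ m`). The rank-`(m + 1)` tensors `v ↦ ε⁻¹ ^ m * ∑ j, c j * (j * ε) ^ weight v` have entries
`p (weight v) * ε ^ (weight v - m)` with `p w = ∑ j, c j * j ^ w`; these vanish for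
`weight v < m`, equal `1` for `weight v = m` and tend to `0` for `weight v > m` as `ε → 0`.
-/

open Filter Topology Finset

namespace Matrix

variable {K : Type*} [Field K] {ι κ ι' : Type*} [Fintype κ] [Fintype ι'] [DecidableEq ι']

theorem card_le_rank_of_det_submatrix_ne_zero (A : Matrix ι κ K) (e : ι' → ι) (f : ι' → κ)
    (h : (A.submatrix e f).det ≠ 0) : Fintype.card ι' ≤ A.rank :=
  calc Fintype.card ι' = (A.submatrix e f).rank :=
        (rank_of_isUnit _ ((isUnit_iff_isUnit_det _).2 h.isUnit)).symm
    _ ≤ A.rank := rank_submatrix_le A e f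

theorem card_le_of_tendsto_of_rank_le [Fintype ι] [TopologicalSpace K] [IsTopologicalRing K]
    [T1Space K] {α : Type*} {l : Filter α} [l.NeBot] {M : α → Matrix ι κ K} {A : Matrix ι κ K}
    (hM : Tendsto M l (𝓝 A)) {r : ℕ} (hr : ∀ a, (M a).rank ≤ r) (e : ι' → ι) (f : ι' → κ)
    (h : (A.submatrix e f).det ≠ 0) : Fintype.card ι' ≤ r := by
  have hdet : Tendsto (fun a => ((M a).submatrix e f).det) l (𝓝 (A.submatrix e f).det) :=
    ((continuous_id.matrix_submatrix e f).matrix_det.tendsto A).comp hM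
  obtain ⟨a, ha⟩ := (hdet.eventually_ne h).exists
  exact (card_le_rank_of_det_submatrix_ne_zero _ e f ha).trans (hr a)

end Matrix

theorem exists_sum_mul_pow_eq {K : Type*} [Field K] {N : ℕ} {x : Fin N → K}
    (hx : Function.Injective x) (b : Fin N → K) :
    ∃ c : Fin N → K, ∀ w : Fin N, ∑ j, c j * x j ^ (w : ℕ) = b w := by
  have hV : IsUnit (Matrix.vandermonde x) :=
    (Matrix.isUnit_iff_isUnit_det _).2 (Matrix.det_vandermonde_ne_zero_iff.2 hx).isUnit
  obtain ⟨c, hc⟩ := Matrix.vecMul_surjective_iff_isUnit.2 hV b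
  exact ⟨c, fun w => congrFun hc w⟩

theorem tendsto_pow_mul_inv_pow_nhdsNE {K : Type*} [Field K] [TopologicalSpace K]
    [IsTopologicalRing K] {m w : ℕ} (hmw : m ≤ w) :
    Tendsto (fun ε : K => ε ^ w * ε⁻¹ ^ m) (𝓝[≠] 0) (𝓝 (if w = m then 1 else 0)) := by
  have hpow : Tendsto (fun ε : K => ε ^ (w - m)) (𝓝[≠] 0) (𝓝 (if w = m then 1 else 0)) := by
    have := ((continuous_pow (w - m)).tendsto (0 : K)).mono_left
      (nhdsWithin_le_nhds (s := {0}ᶜ))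
    simp_rw [zero_pow_eq, Nat.sub_eq_zero_iff_le, hmw.ge_iff_eq'] at this
    exact this
  refine hpow.congr' (eventually_nhdsWithin_of_forall fun ε (hε : ε ≠ 0) => ?_)
  simp only [pow_sub₀ ε hε hmw, inv_pow]

namespace BinaryTensor

section Weight

variable {k : ℕ}

def weight (v : Fin k → Fin 2) : ℕ := #{i | v i = 1}

theorem weight_le (v : Fin k → Fin 2) : weight v ≤ k :=
  (card_filter_le _ _).trans_eq (card_fin k)

theorem weight_append {m n : ℕ} (x : Fin m → Fin 2) (y : Fin n → Fin 2) :
    weight (Fin.append x y) = weight x + weight y := by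
  simp only [weight, card_filter, Fin.sum_univ_add, Fin.append_left, Fin.append_right]

theorem exists_weight_eq {j : ℕ} (hj : j ≤ k) : ∃ v : Fin k → Fin 2, weight v = j :=
  ⟨fun i => if (i : ℕ) < j then 1 else 0, by simp [weight, Fin.card_filter_val_lt, hj]⟩

theorem prod_ite_eq_pow_weight {M : Type*} [CommMonoid M] (a : M) (v : Fin k → Fin 2) :
    ∏ i, (if v i = 1 then a else 1) = a ^ weight v := by
  rw [prod_ite, prod_const, prod_const_one, mul_one]
  rfl

end Weight

section Flatten

variable {m n : ℕ}

def flatten {α R : Type*} (T : (Fin (m + n) → α) → R) : Matrix (Fin m → α) (Fin n → α) R :=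
  Matrix.of fun x y => T (Fin.append x y)

theorem continuous_flatten {α R : Type*} [TopologicalSpace R] :
    Continuous (flatten : ((Fin (m + n) → α) → R) → _) :=
  continuous_pi fun _ => continuous_pi fun _ => continuous_apply _

theorem rank_flatten_le {T : (Fin (m + n) → Fin 2) → ℂ} {r : ℕ} (hT : rankLE T r) :
    (flatten T).rank ≤ r := by
  obtain ⟨u, hu⟩ := hT
  let P : Matrix (Fin m → Fin 2) (Fin r) ℂ :=
    Matrix.of fun x s => ∏ i, u s (Fin.castAdd n i) (x i)
  let Q : Matrix (Fin r) (Fin n → Fin 2) ℂ :=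
    Matrix.of fun s y => ∏ i, u s (Fin.natAdd m i) (y i)
  have hPQ : flatten T = P * Q := by
    ext x y
    simp only [flatten, Matrix.of_apply, hu, Matrix.mul_apply, P, Q, Fin.prod_univ_add,
      Fin.append_left, Fin.append_right]
  calc (flatten T).rank ≤ P.rank := hPQ ▸ Matrix.rank_mul_le_left P Q
    _ ≤ r := (Matrix.rank_le_card_width P).trans_eq (Fintype.card_fin r)

theorem card_le_of_borderRankLE {T : (Fin (m + n) → Fin 2) → ℂ} {r : ℕ}
    (hT : borderRankLE T r) {ι : Type*} [Fintype ι] [DecidableEq ι] (e : ι → Fin m → Fin 2)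
    (f : ι → Fin n → Fin 2) (h : ((flatten T).submatrix e f).det ≠ 0) :
    Fintype.card ι ≤ r := by
  obtain ⟨T', hT', hlim⟩ := hT
  exact Matrix.card_le_of_tendsto_of_rank_le ((continuous_flatten.tendsto T).comp hlim)
    (fun s => rank_flatten_le (hT' s)) e f h

end Flatten

theorem borderRankLE_of_rankLE {k r : ℕ} {T : (Fin k → Fin 2) → ℂ} (h : rankLE T r) :
    borderRankLE T r :=
  ⟨fun _ => T, fun _ => h, tendsto_const_nhds⟩

theorem rankLE_sum_mul_pow_weight {k r : ℕ} (hk : 0 < k) (a t : Fin r → ℂ) :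
    rankLE (fun v : Fin k → Fin 2 => ∑ s, a s * t s ^ weight v) r := by
  let i₀ : Fin k := ⟨0, hk⟩
  refine ⟨fun s i b => (if i = i₀ then a s else 1) * (if b = 1 then t s else 1), fun v => ?_⟩
  refine sum_congr rfl fun s _ => ?_
  rw [prod_mul_distrib, prod_ite_eq' univ i₀, if_pos (mem_univ _), prod_ite_eq_pow_weight]

section Dicke

variable {m n : ℕ}

theorem Dicke_apply (v : Fin (m + n) → Fin 2) : Dicke m n v = if weight v = m then 1 else 0 :=
  rfl

theorem DickeFlat_apply (x : Fin m → Fin 2) (y : Fin n → Fin 2) :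
    DickeFlat m n x y = if weight x + weight y = m then 1 else 0 :=
  rfl

theorem flatten_Dicke : flatten (Dicke m n) = DickeFlat m n := by
  ext x y
  simp only [flatten, Matrix.of_apply, Dicke_apply, DickeFlat_apply, weight_append]

theorem rank_DickeFlat_le : (DickeFlat m n).rank ≤ m + 1 := by
  let B : Matrix (Fin (m + 1)) (Fin n → Fin 2) ℂ :=
    Matrix.of fun j y => if (j : ℕ) + weight y = m then 1 else 0
  have hB : DickeFlat m n =
      B.submatrix (fun x => ⟨weight x, (weight_le x).trans_lt m.lt_succ_self⟩) id := rfl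
  calc (DickeFlat m n).rank ≤ B.rank := hB ▸ Matrix.rank_submatrix_le B _ _
    _ ≤ m + 1 := (Matrix.rank_le_card_height B).trans_eq (Fintype.card_fin _)

theorem exists_submatrix_DickeFlat_eq_one (hmn : m ≤ n) :
    ∃ (x : Fin (m + 1) → Fin m → Fin 2) (y : Fin (m + 1) → Fin n → Fin 2),
      (DickeFlat m n).submatrix x y = 1 := by
  choose x hx using fun j : Fin (m + 1) =>
    exists_weight_eq (k := m) (Nat.lt_succ_iff.1 j.2)
  choose y hy using fun j : Fin (m + 1) => exists_weight_eq (k := n) ((m.sub_le j).trans hmn)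
  refine ⟨x, y, Matrix.ext fun j j' => ?_⟩
  have hj := j.2
  have hj' := j'.2
  simp only [Matrix.submatrix_apply, DickeFlat_apply, hx, hy, Matrix.one_apply, Fin.ext_iff]
  congr 1
  grind

theorem rank_DickeFlat (hmn : m ≤ n) : (DickeFlat m n).rank = m + 1 := by
  obtain ⟨x, y, hxy⟩ := exists_submatrix_DickeFlat_eq_one hmn
  refine rank_DickeFlat_le.antisymm ?_
  simpa using Matrix.card_le_rank_of_det_submatrix_ne_zero _ x y (by simp [hxy])

theorem le_of_borderRankLE_Dicke (hmn : m ≤ n) {r : ℕ} (h : borderRankLE (Dicke m n) r) :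
    m + 1 ≤ r := by
  obtain ⟨x, y, hxy⟩ := exists_submatrix_DickeFlat_eq_one hmn
  simpa using card_le_of_borderRankLE h x y (by simp [flatten_Dicke, hxy])

theorem rankLE_Dicke_zero : rankLE (Dicke 0 n) 1 :=
  ⟨fun _ _ b => if b = 1 then 0 else 1, fun v => by
    simp only [Fin.sum_univ_one, prod_ite_eq_pow_weight, zero_pow_eq]
    rfl⟩

theorem exists_tendsto_sum_mul_pow_weight_Dicke :
    ∃ a t : ℂ → Fin (m + 1) → ℂ, Tendsto (fun ε v => ∑ j, a ε j * t ε j ^ weight v)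
      (𝓝[≠] 0) (𝓝 (Dicke m n)) := by
  obtain ⟨c, hc⟩ := exists_sum_mul_pow_eq (x := fun j : Fin (m + 1) => ((j : ℕ) : ℂ))
    (Nat.cast_injective.comp Fin.val_injective) fun w => if (w : ℕ) = m then 1 else 0
  let p : ℕ → ℂ := fun w => ∑ j : Fin (m + 1), c j * (j : ℂ) ^ w
  have hp_lt : ∀ w < m, p w = 0 := fun w hw => (hc ⟨w, by omega⟩).trans (if_neg hw.ne)
  have hp_m : p m = 1 := (hc (Fin.last m)).trans (if_pos rfl)
  refine ⟨fun ε j => c j * ε⁻¹ ^ m, fun ε j => j * ε, tendsto_pi_nhds.2 fun v => ?_⟩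
  have hsum : ∀ ε : ℂ, ∑ j : Fin (m + 1), c j * ε⁻¹ ^ m * (j * ε) ^ weight v
      = p (weight v) * (ε ^ weight v * ε⁻¹ ^ m) := fun ε => by
    simp only [p, sum_mul, mul_pow]
    exact sum_congr rfl fun j _ => by ring
  simp only [hsum, Dicke_apply]
  rcases lt_or_ge (weight v) m with hw | hw
  · simp [hp_lt _ hw, hw.ne]
  · convert (tendsto_pow_mul_inv_pow_nhdsNE hw).const_mul (p (weight v)) using 2
    split_ifs with h <;> simp [h, hp_m]

theorem borderRankLE_Dicke : borderRankLE (Dicke m n) (m + 1) := by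
  rcases Nat.eq_zero_or_pos m with rfl | hm
  · exact borderRankLE_of_rankLE rankLE_Dicke_zero
  obtain ⟨a, t, hat⟩ := exists_tendsto_sum_mul_pow_weight_Dicke
  have hε : Tendsto (fun s : ℕ => 1 / ((s : ℂ) + 1)) atTop (𝓝[≠] 0) :=
    tendsto_nhdsWithin_iff.2 ⟨tendsto_one_div_add_atTop_nhds_zero_nat,
      Eventually.of_forall fun s => one_div_ne_zero s.cast_add_one_ne_zero⟩
  exact ⟨_, fun s => rankLE_sum_mul_pow_weight (by omega) _ _, hat.comp hε⟩

end Dicke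

end BinaryTensor

open BinaryTensor

/-- The Schmidt rank of D_{m,n} across the first-m vs last-n cut is m+1 (for m ≤ n);
hence the border rank of D_{m,n} is exactly m+1. -/
theorem Dicke_schmidt_and_border_rank (m n : ℕ) (hmn : m ≤ n) :
    (DickeFlat m n).rank = m + 1 ∧
    borderRankLE (Dicke m n) (m + 1) ∧
    ∀ r : ℕ, borderRankLE (Dicke m n) r → m + 1 ≤ r :=
  ⟨rank_DickeFlat hmn, borderRankLE_Dicke, fun _ => le_of_borderRankLE_Dicke hmn⟩
end

section
/- Degeneration yields asymptotic rate 1: if a k-partite globally entangled state ψ degenerates to φ (i.e., there exist matrices A_i(ε) with polynomial entries in ε such that (A₁(ε)⊗⋯⊗A_k(ε))ψ = ε^d φ + O(ε^{d+1})), and ω(ψ, GHZ) < ∞, then ψ^{⊗n} ⊗ GHZ_{ne+1} ⊵ φ^{⊗n} for every n, where e is the error degree of the degeneration; consequently ω(ψ,φ) ≤ 1. -/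
/-!
Evaluating a degeneration of `ψ` to `φ` with error degree `e` at a point `ε` and taking `n`-th
tensor powers gives `ψ^{⊗n} ⊵ ε^{dn} Q(ε)`, where `Q` is a polynomial of degree at most `ne`
with constant coefficient `φ^{⊗n}`. Averaging `ε^{-dn}` times these tensors over the `(ne+1)`-th
roots of unity recovers `φ^{⊗n}`, and a shared `GHZ_{ne+1}` lets all parties use the same root,
so the average is a single restriction. As `ψ^{⊗m} ⊵ GHZ_2` for some `m`, the GHZ state costs
only `O(log n)` further copies of `ψ`, whence `ω(ψ, φ) ≤ 1`.
-/

open scoped BigOperators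

namespace Paper

def Restricts {k : ℕ} {ι κ : Fin k → Type} [∀ i, Fintype (ι i)] [∀ i, Fintype (κ i)]
    (ψ : ((i : Fin k) → ι i) → ℂ) (φ : ((i : Fin k) → κ i) → ℂ) : Prop :=
  ∃ A : (i : Fin k) → κ i → ι i → ℂ,
    ∀ v, φ v = ∑ w : (i : Fin k) → ι i, (∏ i, A i (v i) (w i)) * ψ w

def pow {k : ℕ} {ι : Fin k → Type} (ψ : ((i : Fin k) → ι i) → ℂ) (m : ℕ) :
    ((i : Fin k) → (Fin m → ι i)) → ℂ :=
  fun v => ∏ j : Fin m, ψ (fun i => v i j)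

def tprod {k : ℕ} {ι κ : Fin k → Type} (ψ : ((i : Fin k) → ι i) → ℂ)
    (φ : ((i : Fin k) → κ i) → ℂ) : ((i : Fin k) → ι i × κ i) → ℂ :=
  fun v => ψ (fun i => (v i).1) * φ (fun i => (v i).2)

noncomputable def omegaN {k : ℕ} {ι κ : Fin k → Type} [∀ i, Fintype (ι i)] [∀ i, Fintype (κ i)]
    (ψ : ((i : Fin k) → ι i) → ℂ) (φ : ((i : Fin k) → κ i) → ℂ) (n : ℕ) : ℝ :=
  ((sInf {m : ℕ | Restricts (pow ψ m) (pow φ n)} : ℕ) : ℝ) / n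

noncomputable def omega {k : ℕ} {ι κ : Fin k → Type} [∀ i, Fintype (ι i)] [∀ i, Fintype (κ i)]
    (ψ : ((i : Fin k) → ι i) → ℂ) (φ : ((i : Fin k) → κ i) → ℂ) : ℝ :=
  ⨅ n : ℕ+, omegaN ψ φ n

def GHZ (k a : ℕ) : ((_ : Fin k) → Fin a) → ℂ :=
  fun v => if ∀ i j : Fin k, v i = v j then 1 else 0

def W (k : ℕ) : ((_ : Fin k) → Fin 2) → ℂ :=
  fun v => if (Finset.univ.filter fun i => v i = 1).card = 1 then 1 else 0

def rankLE {k : ℕ} {ι : Fin k → Type} (T : ((i : Fin k) → ι i) → ℂ) (r : ℕ) : Prop :=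
  ∃ u : Fin r → (i : Fin k) → ι i → ℂ, ∀ v, T v = ∑ s : Fin r, ∏ i, u s i (v i)

noncomputable def trank {k : ℕ} {ι : Fin k → Type} (T : ((i : Fin k) → ι i) → ℂ) : ℕ :=
  sInf {r | rankLE T r}


section Restriction

variable {k : ℕ}

lemma restricts_of_reindex {ι κ : Fin k → Type} [∀ i, Fintype (ι i)] [∀ i, Fintype (κ i)]
    {ψ : ((i : Fin k) → ι i) → ℂ} {φ : ((i : Fin k) → κ i) → ℂ}
    (f : (i : Fin k) → κ i → ι i) (h : ∀ v, φ v = ψ (fun i => f i (v i))) :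
    Restricts ψ φ := by
  classical
  refine ⟨fun i x y => if y = f i x then 1 else 0, fun v => ?_⟩
  rw [h, Fintype.sum_eq_single (fun i => f i (v i))]
  · simp
  · intro w hw
    obtain ⟨i, hi⟩ := Function.ne_iff.mp hw
    rw [Finset.prod_eq_zero (Finset.mem_univ i) (if_neg hi), zero_mul]

lemma Restricts.refl {ι : Fin k → Type} [∀ i, Fintype (ι i)] (ψ : ((i : Fin k) → ι i) → ℂ) :
    Restricts ψ ψ :=
  restricts_of_reindex (fun _ => id) fun _ => rfl

lemma Restricts.trans {ι κ μ : Fin k → Type}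
    [∀ i, Fintype (ι i)] [∀ i, Fintype (κ i)] [∀ i, Fintype (μ i)]
    {ψ : ((i : Fin k) → ι i) → ℂ} {φ : ((i : Fin k) → κ i) → ℂ} {χ : ((i : Fin k) → μ i) → ℂ}
    (hψφ : Restricts ψ φ) (hφχ : Restricts φ χ) : Restricts ψ χ := by
  obtain ⟨A, hA⟩ := hψφ
  obtain ⟨B, hB⟩ := hφχ
  refine ⟨fun i x y => ∑ z, B i x z * A i z y, fun v => ?_⟩
  simp only [Finset.prod_univ_sum, Finset.sum_mul]
  rw [Finset.sum_comm, hB v]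
  refine Finset.sum_congr rfl fun u _ => ?_
  rw [hA u, Finset.mul_sum]
  refine Finset.sum_congr rfl fun w _ => ?_
  rw [Finset.prod_mul_distrib, mul_assoc]

lemma restricts_tprod {ι₁ κ₁ ι₂ κ₂ : Fin k → Type}
    [∀ i, Fintype (ι₁ i)] [∀ i, Fintype (κ₁ i)] [∀ i, Fintype (ι₂ i)] [∀ i, Fintype (κ₂ i)]
    {ψ₁ : ((i : Fin k) → ι₁ i) → ℂ} {φ₁ : ((i : Fin k) → κ₁ i) → ℂ}
    {ψ₂ : ((i : Fin k) → ι₂ i) → ℂ} {φ₂ : ((i : Fin k) → κ₂ i) → ℂ}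
    (h₁ : Restricts ψ₁ φ₁) (h₂ : Restricts ψ₂ φ₂) :
    Restricts (tprod ψ₁ ψ₂) (tprod φ₁ φ₂) := by
  obtain ⟨A, hA⟩ := h₁
  obtain ⟨B, hB⟩ := h₂
  refine ⟨fun i x y => A i x.1 y.1 * B i x.2 y.2, fun v => ?_⟩
  rw [← (Equiv.arrowProdEquivProdArrow (Fin k) ι₁ ι₂).symm.sum_comp, Fintype.sum_prod_type]
  simp only [tprod, hA, hB, Finset.sum_mul_sum]
  refine Finset.sum_congr rfl fun w₁ _ => Finset.sum_congr rfl fun w₂ _ => ?_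
  simp only [Equiv.arrowProdEquivProdArrow_symm_apply, Finset.prod_mul_distrib]
  ring

lemma restricts_pow {ι κ : Fin k → Type} [∀ i, Fintype (ι i)] [∀ i, Fintype (κ i)]
    {ψ : ((i : Fin k) → ι i) → ℂ} {φ : ((i : Fin k) → κ i) → ℂ}
    (h : Restricts ψ φ) (n : ℕ) : Restricts (pow ψ n) (pow φ n) := by
  obtain ⟨A, hA⟩ := h
  refine ⟨fun i x y => ∏ t, A i (x t) (y t), fun v => ?_⟩
  simp only [pow, hA, Finset.prod_univ_sum]
  refine Fintype.sum_equiv (Equiv.piComm fun (_ : Fin n) i => ι i) _ _ fun w => ?_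
  rw [Finset.prod_mul_distrib, Finset.prod_comm]
  rfl

end Restriction

section Reindexing

variable {k : ℕ} {ι : Fin k → Type} [∀ i, Fintype (ι i)]

lemma restricts_pow_one (ψ : ((i : Fin k) → ι i) → ℂ) : Restricts (pow ψ 1) ψ :=
  restricts_of_reindex (fun _ x _ => x) fun _ => by simp [pow]

lemma restricts_pow_add (ψ : ((i : Fin k) → ι i) → ℂ) (a b : ℕ) :
    Restricts (pow ψ (a + b)) (tprod (pow ψ a) (pow ψ b)) :=
  restricts_of_reindex (fun _ x => Fin.append x.1 x.2) fun v => by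
    simp [tprod, pow, Fin.prod_univ_add]

lemma restricts_pow_mul (ψ : ((i : Fin k) → ι i) → ℂ) (a b : ℕ) :
    Restricts (pow ψ (a * b)) (pow (pow ψ a) b) :=
  restricts_of_reindex (fun _ x s => x (finProdFinEquiv.symm s).2 (finProdFinEquiv.symm s).1)
    fun v => by
      rw [pow, pow, ← finProdFinEquiv.prod_comp, Fintype.prod_prod_type, Finset.prod_comm]
      simp [pow]

lemma restricts_GHZ_of_le {a b : ℕ} (hba : b ≤ a) : Restricts (GHZ k a) (GHZ k b) :=
  restricts_of_reindex (fun _ => Fin.castLE hba) fun v => by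
    simp only [GHZ, (Fin.castLE_injective hba).eq_iff]

lemma restricts_pow_GHZ_two (L : ℕ) : Restricts (pow (GHZ k 2) L) (GHZ k (2 ^ L)) :=
  restricts_of_reindex (fun _ x => finFunctionFinEquiv.symm x) fun v => by
    simp only [pow, GHZ, Finset.prod_boole, Finset.mem_univ, true_implies]
    refine if_congr ⟨fun h t i j => by rw [h i j], fun h i j => ?_⟩ rfl rfl
    exact finFunctionFinEquiv.symm.injective (funext fun t => h t i j)

end Reindexing

section GHZ

variable {k : ℕ}

lemma sum_mul_GHZ (hk : 0 < k) {N : ℕ} (F : ((_ : Fin k) → Fin N) → ℂ) :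
    ∑ w, F w * GHZ k N w = ∑ j, F fun _ => j := by
  classical
  have hconst : Finset.univ.filter (fun w : (_ : Fin k) → Fin N => ∀ i j, w i = w j)
      = Finset.univ.image fun j _ => j := by
    ext w
    simp only [Finset.mem_filter, Finset.mem_univ, true_and, Finset.mem_image]
    exact ⟨fun h => ⟨w ⟨0, hk⟩, funext fun i => h _ i⟩, by rintro ⟨j, rfl⟩ _ _; rfl⟩
  simp only [GHZ, mul_ite, mul_one, mul_zero]
  rw [← Finset.sum_filter, hconst, Finset.sum_image fun _ _ _ _ h => congrFun h ⟨0, hk⟩]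

/-- The GHZ index tells every party which restriction map to apply; one party also multiplies by
the coefficient. -/
lemma restricts_tprod_GHZ_sum (hk : 0 < k) {ι κ : Fin k → Type} [∀ i, Fintype (ι i)]
    [∀ i, Fintype (κ i)] {ψ : ((i : Fin k) → ι i) → ℂ} {N : ℕ}
    {T : Fin N → ((i : Fin k) → κ i) → ℂ} (hT : ∀ j, Restricts ψ (T j)) (c : Fin N → ℂ) :
    Restricts (tprod ψ (GHZ k N)) fun v => ∑ j, c j * T j v := by
  classical
  choose A hA using hT
  let i₀ : Fin k := ⟨0, hk⟩
  refine ⟨fun i x y => (if i = i₀ then c y.2 else 1) * A y.2 i x y.1, fun v => ?_⟩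
  rw [← (Equiv.arrowProdEquivProdArrow (Fin k) ι fun _ => Fin N).symm.sum_comp,
    Fintype.sum_prod_type, Finset.sum_comm]
  simp only [Equiv.arrowProdEquivProdArrow_symm_apply, tprod, ← mul_assoc, ← Finset.sum_mul]
  rw [sum_mul_GHZ hk]
  refine Finset.sum_congr rfl fun j _ => ?_
  rw [hA j v, Finset.mul_sum]
  refine Finset.sum_congr rfl fun w _ => ?_
  rw [Finset.prod_mul_distrib, Finset.prod_ite_eq' Finset.univ i₀, if_pos (Finset.mem_univ _),
    mul_assoc]

end GHZ

section Polynomial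

open Polynomial

variable {R : Type*} [CommRing R] [IsDomain R] {ζ : R} {N : ℕ}

lemma _root_.IsPrimitiveRoot.sum_pow_pow_eq_zero (hζ : IsPrimitiveRoot ζ N) {m : ℕ} (hm₀ : 0 < m)
    (hmN : m < N) : ∑ j ∈ Finset.range N, (ζ ^ j) ^ m = 0 := by
  have hne : ζ ^ m - 1 ≠ 0 := sub_ne_zero.mpr (hζ.pow_ne_one_of_pos_of_lt hm₀.ne' hmN)
  have hroot : (ζ ^ m) ^ N = 1 := by rw [← pow_mul, mul_comm, pow_mul, hζ.pow_eq_one, one_pow]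
  have hgeom := mul_geom_sum (ζ ^ m) N
  rw [hroot, sub_self] at hgeom
  simpa only [← pow_mul, mul_comm m] using (mul_eq_zero.mp hgeom).resolve_left hne

lemma _root_.IsPrimitiveRoot.sum_eval_pow (hζ : IsPrimitiveRoot ζ N) {Q : R[X]}
    (hQ : Q.natDegree < N) :
    ∑ j ∈ Finset.range N, Q.eval (ζ ^ j) = N * Q.coeff 0 := by
  simp only [eval_eq_sum_range' hQ]
  rw [Finset.sum_comm, Finset.sum_eq_single_of_mem 0 (Finset.mem_range.mpr (by omega))]
  · simp [mul_comm]
  · intro m hm hm₀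
    rw [← Finset.mul_sum, hζ.sum_pow_pow_eq_zero (Nat.pos_of_ne_zero hm₀)
      (Finset.mem_range.mp hm), mul_zero]

lemma _root_.Polynomial.coeff_zero_eq_of_forall_pow_mul_eval_eq [Infinite R] {p : R[X]}
    {d : ℕ} {a : R} (h : ∀ x, x ^ d * p.eval x = a) : p.coeff 0 = a := by
  have hpoly : X ^ d * p = C a := Polynomial.funext fun x => by simp [h]
  have hcoeff (m : ℕ) := congrArg (coeff · m) hpoly
  rcases Nat.eq_zero_or_pos d with rfl | hd
  · simpa using hcoeff 0
  · have h₀ : 0 = a := by simpa [coeff_X_pow_mul', hd.ne] using hcoeff 0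
    simpa [coeff_X_pow_mul', hd.ne', ← h₀] using hcoeff d

end Polynomial

section Degeneration

open Polynomial

variable {k : ℕ} {ι κ : Fin k → Type} [∀ i, Fintype (ι i)] [∀ i, Fintype (κ i)]

/-- `ψ ⊵ ε ^ d • P ε` for every `ε`, where `P ε = φ + O(ε)` is polynomial of degree at most `e`
in `ε`; the restriction maps need not depend polynomially on `ε`. -/
def Degenerates (ψ : ((i : Fin k) → ι i) → ℂ) (φ : ((i : Fin k) → κ i) → ℂ) (d e : ℕ) : Prop :=
  ∃ P : ((i : Fin k) → κ i) → ℂ[X], (∀ v, (P v).natDegree ≤ e) ∧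
    (∀ v, (P v).coeff 0 = φ v) ∧ ∀ ε : ℂ, Restricts ψ fun v => ε ^ d * (P v).eval ε

lemma degenerates_of_eval_eq {ψ : ((i : Fin k) → ι i) → ℂ} {φ : ((i : Fin k) → κ i) → ℂ}
    {d e : ℕ} (A : (i : Fin k) → κ i → ι i → ℂ[X]) (φs : Fin e → ((i : Fin k) → κ i) → ℂ)
    (h : ∀ (ε : ℂ) (v : (i : Fin k) → κ i),
      ∑ w : (i : Fin k) → ι i, (∏ i, (A i (v i) (w i)).eval ε) * ψ w
        = ε ^ d * φ v + ∑ j : Fin e, ε ^ (d + 1 + (j : ℕ)) * φs j v) :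
    Degenerates ψ φ d e := by
  refine ⟨fun v => C (φ v) + ∑ j : Fin e, C (φs j v) * X ^ (j + 1 : ℕ), fun v => ?_,
    fun v => by simp, fun ε => ⟨fun i x y => (A i x y).eval ε, fun v => ?_⟩⟩
  · refine (natDegree_add_le _ _).trans (max_le (by simp) ?_)
    refine natDegree_sum_le_of_forall_le _ _ fun j _ => ?_
    exact (natDegree_C_mul_X_pow_le _ _).trans j.isLt
  · beta_reduce
    rw [h, eval_add, eval_finsetSum, mul_add, Finset.mul_sum]
    simp only [eval_C, eval_mul, eval_pow, eval_X]
    congr 1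
    exact Finset.sum_congr rfl fun j _ => by ring

lemma degenerates_pow {ψ : ((i : Fin k) → ι i) → ℂ} {φ : ((i : Fin k) → κ i) → ℂ} {d e : ℕ}
    (h : Degenerates ψ φ d e) (n : ℕ) : Degenerates (pow ψ n) (pow φ n) (d * n) (n * e) := by
  obtain ⟨P, hdeg, hcoeff, hres⟩ := h
  refine ⟨fun v => ∏ t, P fun i => v i t, fun v => ?_, fun v => ?_, fun ε => ?_⟩
  · refine (natDegree_prod_le _ _).trans ?_
    exact (Finset.sum_le_sum fun t _ => hdeg fun i => v i t).trans_eq (by simp)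
  · simp [coeff_zero_prod, hcoeff, pow]
  · convert restricts_pow (hres ε) n using 1
    funext v
    simp [pow, eval_prod, Finset.prod_mul_distrib, pow_mul]

end Degeneration

section Interpolation

variable {k : ℕ} {ι κ : Fin k → Type} [∀ i, Fintype (ι i)] [∀ i, Fintype (κ i)]

lemma Restricts.apply_eq_of_fin_zero {ι κ : Fin 0 → Type} [∀ i, Fintype (ι i)]
    [∀ i, Fintype (κ i)] {ψ : ((i : Fin 0) → ι i) → ℂ} {φ : ((i : Fin 0) → κ i) → ℂ}
    (h : Restricts ψ φ) (v : (i : Fin 0) → κ i) (w : (i : Fin 0) → ι i) : φ v = ψ w := by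
  obtain ⟨A, hA⟩ := h
  rw [hA, Fintype.sum_unique, Subsingleton.elim default w]
  simp

lemma Degenerates.restricts_tprod_GHZ {ψ : ((i : Fin k) → ι i) → ℂ}
    {φ : ((i : Fin k) → κ i) → ℂ} {d e : ℕ} (h : Degenerates ψ φ d e) :
    Restricts (tprod ψ (GHZ k (e + 1))) φ := by
  obtain ⟨P, hdeg, hcoeff, hres⟩ := h
  rcases Nat.eq_zero_or_pos k with rfl | hk
  · -- with no parties `GHZ 0 (e + 1) = 1`, but `ψ = ε ^ d • P ε` for all `ε` forces `ψ = φ`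
    refine restricts_of_reindex (fun i => i.elim0) fun v => ?_
    rw [tprod, GHZ, if_pos fun i => i.elim0, mul_one, ← hcoeff]
    exact Polynomial.coeff_zero_eq_of_forall_pow_mul_eval_eq fun ε =>
      (hres ε).apply_eq_of_fin_zero v _
  · set N := e + 1
    have hN : N ≠ 0 := e.succ_ne_zero
    have hζ := Complex.isPrimitiveRoot_exp N hN
    set ζ := Complex.exp (2 * Real.pi * Complex.I / N)
    convert restricts_tprod_GHZ_sum hk (fun j : Fin N => hres (ζ ^ (j : ℕ)))
      (fun j => (N : ℂ)⁻¹ * ((ζ ^ (j : ℕ)) ^ d)⁻¹) using 1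
    funext v
    have hζj (j : ℕ) : (ζ ^ j) ^ d ≠ 0 := pow_ne_zero _ (pow_ne_zero _ (hζ.ne_zero hN))
    calc φ v = (N : ℂ)⁻¹ * ∑ j ∈ Finset.range N, (P v).eval (ζ ^ j) := by
          rw [hζ.sum_eval_pow ((hdeg v).trans_lt e.lt_succ_self), hcoeff,
            inv_mul_cancel_left₀ (Nat.cast_ne_zero.mpr hN)]
      _ = _ := by
          rw [Finset.mul_sum, ← Fin.sum_univ_eq_sum_range]
          refine Finset.sum_congr rfl fun j _ => ?_
          field_simp [hζj]

end Interpolation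

section Rate

open Filter Topology

variable {k : ℕ} {ι κ : Fin k → Type} [∀ i, Fintype (ι i)] [∀ i, Fintype (κ i)]

lemma omegaN_le_of_restricts {ψ : ((i : Fin k) → ι i) → ℂ} {φ : ((i : Fin k) → κ i) → ℂ}
    {m n : ℕ} (h : Restricts (pow ψ m) (pow φ n)) : omegaN ψ φ n ≤ m / n :=
  div_le_div_of_nonneg_right (by exact_mod_cast Nat.sInf_le h) n.cast_nonneg

lemma omega_le_omegaN (ψ : ((i : Fin k) → ι i) → ℂ) (φ : ((i : Fin k) → κ i) → ℂ) (n : ℕ+) :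
    omega ψ φ ≤ omegaN ψ φ n :=
  ciInf_le ⟨0, by rintro _ ⟨n, rfl⟩; exact div_nonneg (Nat.cast_nonneg _) n.1.cast_nonneg⟩ n

lemma tendsto_two_pow_add_mul_div_two_pow (a b : ℕ) :
    Tendsto (fun t : ℕ => ((2 ^ t + a * (t + b) : ℕ) : ℝ) / 2 ^ t) atTop (𝓝 1) := by
  have hlin := tendsto_pow_const_div_const_pow_of_one_lt 1 one_lt_two
  have hconst := tendsto_pow_const_div_const_pow_of_one_lt 0 one_lt_two
  have hsum := (hlin.const_mul (a : ℝ)).add (hconst.const_mul ((a : ℝ) * b)) |>.const_add 1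
  rw [mul_zero, mul_zero, add_zero, add_zero] at hsum
  refine hsum.congr fun t => ?_
  push_cast
  field_simp

lemma omega_le_one_of_restricts {ψ : ((i : Fin k) → ι i) → ℂ} {φ : ((i : Fin k) → κ i) → ℂ}
    (a b : ℕ) (h : ∀ t : ℕ, Restricts (pow ψ (2 ^ t + a * (t + b))) (pow φ (2 ^ t))) :
    omega ψ φ ≤ 1 :=
  ge_of_tendsto' (tendsto_two_pow_add_mul_div_two_pow a b) fun t =>
    (omega_le_omegaN ψ φ ⟨2 ^ t, by positivity⟩).trans <|
      (omegaN_le_of_restricts (h t)).trans_eq (by push_cast; rfl)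

lemma restricts_pow_GHZ_of_le_two_pow {ψ : ((i : Fin k) → ι i) → ℂ} {m : ℕ}
    (h : Restricts (pow ψ m) (GHZ k 2)) {b L : ℕ} (hb : b ≤ 2 ^ L) :
    Restricts (pow ψ (m * L)) (GHZ k b) :=
  (restricts_pow_mul ψ m L).trans <|
    ((restricts_pow h L).trans (restricts_pow_GHZ_two L)).trans (restricts_GHZ_of_le hb)

end Rate

/-- Degeneration yields asymptotic rate 1: if ψ degenerates to φ with error degree e,
and ω(ψ,GHZ) < ∞, then ψ^{⊗n} ⊗ GHZ_{ne+1} restricts to φ^{⊗n}, hence ω(ψ,φ) ≤ 1. -/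
theorem degeneration_rate_one {k : ℕ} {ι κ : Fin k → Type}
    [∀ i, Fintype (ι i)] [∀ i, Fintype (κ i)]
    (ψ : ((i : Fin k) → ι i) → ℂ) (φ : ((i : Fin k) → κ i) → ℂ)
    (d e : ℕ) (A : (i : Fin k) → κ i → ι i → Polynomial ℂ)
    (φs : Fin e → (((i : Fin k) → κ i) → ℂ))
    (hdeg : ∀ (ε : ℂ) (v : (i : Fin k) → κ i),
      ∑ w : (i : Fin k) → ι i, (∏ i, (A i (v i) (w i)).eval ε) * ψ w
        = ε ^ d * φ v + ∑ j : Fin e, ε ^ (d + 1 + (j : ℕ)) * φs j v)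
    (hGHZfin : ∀ n : ℕ, 0 < n →
      {m : ℕ | Restricts (pow ψ m) (pow (GHZ k 2) n)}.Nonempty) :
    (∀ n : ℕ, 0 < n →
      Restricts (tprod (pow ψ n) (GHZ k (n * e + 1))) (pow φ n)) ∧
    omega ψ φ ≤ 1 := by
  have hψφ : Degenerates ψ φ d e := degenerates_of_eval_eq A φs hdeg
  have hpow (n : ℕ) : Restricts (tprod (pow ψ n) (GHZ k (n * e + 1))) (pow φ n) :=
    (degenerates_pow hψφ n).restricts_tprod_GHZ
  refine ⟨fun n _ => hpow n, ?_⟩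
  obtain ⟨m, hm⟩ := hGHZfin 1 one_pos
  set c := Nat.clog 2 (e + 1)
  refine omega_le_one_of_restricts m c fun t => ?_
  have hlevels : 2 ^ t * e + 1 ≤ 2 ^ (t + c) :=
    calc 2 ^ t * e + 1 ≤ 2 ^ t * (e + 1) := by nlinarith [Nat.one_le_two_pow (n := t)]
      _ ≤ 2 ^ t * 2 ^ c := Nat.mul_le_mul_left _ (Nat.le_pow_clog one_lt_two _)
      _ = 2 ^ (t + c) := (pow_add 2 t c).symm
  have hGHZ : Restricts (pow ψ (m * (t + c))) (GHZ k (2 ^ t * e + 1)) :=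
    restricts_pow_GHZ_of_le_two_pow (hm.trans (restricts_pow_one _)) hlevels
  exact (restricts_pow_add ψ _ _).trans <|
    (restricts_tprod (Restricts.refl _) hGHZ).trans (hpow (2 ^ t))

end Paper
end
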